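/- arXiv:2403.05998 — 7 statements merged into one kernel-verified Lean document; each statement's English description precedes it below -/
import Mathlib

section
/- Let G be a group, A a set, M ⊆ G finite, and S = A^(A^M). For any s, t ∈ S^G with M a common memory, the composition σ_t ∘ σ_s is again a NUCA with memory M² = M·M; i.e., there exists u ∈ (A^(A^(M·M)))^G such that σ_t ∘ σ_s = σ_u. -/
open Pointwise

/-- The NUCA with memory `M` and configuration of local defining maps `s`. -/
def nuca {G A : Type*} [Group G] (M : Set G) (s : G → (M → A) → A)
    (x : G → A) : G → A :=
  fun g => s g fun m => x (g * (m : G))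

section Composition

variable {G A : Type*} [Group G] {M N : Set G}

def nucaComp (s : G → (M → A) → A) (t : G → (N → A) → A) :
    G → ((N * M : Set G) → A) → A :=
  fun g y => t g fun n => s (g * n) fun m => y ⟨n * m, Set.mul_mem_mul n.2 m.2⟩

theorem nuca_comp_nuca (s : G → (M → A) → A) (t : G → (N → A) → A) :
    nuca N t ∘ nuca M s = nuca (N * M) (nucaComp s t) := by
  funext x g
  simp only [Function.comp_apply, nuca, nucaComp, mul_assoc]

end Composition

theorem stmt1_general {G A : Type*} [Group G] (M : Set G)
    (s t : G → (M → A) → A) :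
    ∃ u : G → ((M * M : Set G) → A) → A,
      nuca M t ∘ nuca M s = nuca (M * M) u :=
  ⟨nucaComp s t, nuca_comp_nuca s t⟩

/-- The composition of two NUCA with memory `M` is a NUCA with memory `M * M`. -/
theorem stmt1 {G A : Type*} [Group G] (M : Set G) (hM : M.Finite)
    (s t : G → (M → A) → A) :
    ∃ u : G → ((M * M : Set G) → A) → A,
      nuca M t ∘ nuca M s = nuca (M * M) u :=
  stmt1_general M s t
end

section
/- Let G be a group, A a set, M, N ⊆ G with 1_G ∈ M ∩ N, S = A^(A^M), T = A^(A^N), s ∈ S^G, t ∈ T^G, and fix g ∈ G. Then σ_t(σ_s(x))(g) = x(g) for all x ∈ A^G if and only if t(g) ∘ γ_{g,N} ∘ f^{+M}_{gN, s|_{gN}} ∘ γ_{g,NM}⁻¹ = π, where π : A^{NM} → A is the evaluation z ↦ z(1_G). -/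
/-!
The value of `σ_t(σ_s(x))` at `g` depends on `x` only through its translate `z = (g⁻¹x)|_{NM}`,
and it is the composite local map applied to `z`. Since `NM ∋ 1` is nonempty, every
`z : A^{NM}` is such a translate, so the identity for all `x` is the identity for all `z`.
-/

open Pointwise

theorem nuca_nuca_apply {G A : Type*} [Group G] (M N : Set G) (s : G → (M → A) → A)
    (t : G → (N → A) → A) (x : G → A) (g : G) :
    nuca N t (nuca M s x) g = t g fun n => s (g * n) fun m => x (g * (n * m)) := by
  simp only [nuca, mul_assoc]

theorem surjective_restrict_translate {G A : Type*} [Group G] {K : Set G} (hK : K.Nonempty)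
    (g : G) : Function.Surjective fun (x : G → A) (k : K) => x (g * k) := by
  intro z
  have hinj : Function.Injective fun k : K => g * k :=
    (mul_right_injective g).comp Subtype.val_injective
  refine ⟨Function.extend (fun k : K => g * k) z fun _ => z ⟨hK.some, hK.some_mem⟩, ?_⟩
  funext k
  exact hinj.extend_apply z _ k

/-- The composite map `γ_{g,N} ∘ f^{+M}_{gN, s|_{gN}} ∘ γ_{g,NM}⁻¹ : A^{NM} → A^N` sends
`z` to `n ↦ s(g n)(m ↦ z(n m))`, and `π` is the evaluation at `1`. -/
theorem stmt2 {G A : Type*} [Group G] (M N : Set G)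
    (h1M : (1 : G) ∈ M) (h1N : (1 : G) ∈ N)
    (s : G → (M → A) → A) (t : G → (N → A) → A) (g : G) :
    (∀ x : G → A, nuca N t (nuca M s x) g = x g) ↔
      (∀ z : (N * M : Set G) → A,
        t g (fun n => s (g * (n : G))
            (fun m => z ⟨(n : G) * (m : G), Set.mul_mem_mul n.2 m.2⟩))
          = z ⟨1, by simpa using Set.mul_mem_mul h1N h1M⟩) := by
  have h1NM : (1 : G) ∈ (N * M : Set G) := by simpa using Set.mul_mem_mul h1N h1M
  rw [(surjective_restrict_translate ⟨1, h1NM⟩ g).forall]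
  simp only [nuca_nuca_apply, mul_one]
end

section
/- Let G be a countable group, M ⊆ G finite, A a finite set, S = A^(A^M), and s ∈ S^G. If σ_s is invertible (i.e., bijective with inverse equal to some NUCA σ_t of finite memory), then σ_s is stably invertible: there exist a finite N ⊆ G and t ∈ T^G with T = A^(A^N) such that for every p ∈ Σ(s) there is q ∈ Σ(t) with σ_p ∘ σ_q = σ_q ∘ σ_p = Id. -/
/-- `Σ(s)`: the closure of the shift orbit of `s` in `S^G` for the
prodiscrete topology (product of discrete topologies). -/
def orbitClosure {G S : Type*} [Group G] (s : G → S) : Set (G → S) :=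
  @closure _ (@Pi.topologicalSpace G (fun _ => S) (fun _ => ⊥))
    {p | ∃ g : G, p = fun h => s (g⁻¹ * h)}


/-
The diagonal orbit of `(s, t)` in `S^G × T^G` consists of pairs of mutually inverse NUCA, since
shifting both local rules conjugates both maps by the same shift. With finite memories, the
relation "`σ_q ∘ σ_p = Id` and `σ_p ∘ σ_q = Id`" is closed, because each coordinate of
`σ_q (σ_p x)` depends on finitely many coordinates of `(p, q)`; so it holds on the closure of the
diagonal orbit. As `T^G` is compact, the first projection of that closure is closed, hence it is
all of `Σ(s)`, and the second coordinate of a point of it lies in `Σ(t)`.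
-/

open Function Set

theorem closure_range_subset_image_fst_closure {ι X Y : Type*} [TopologicalSpace X]
    [TopologicalSpace Y] [CompactSpace Y] (f : ι → X) (g : ι → Y) :
    closure (range f) ⊆ Prod.fst '' closure (range fun i => (f i, g i)) := by
  rw [← isClosedMap_fst_of_compactSpace.closure_image_eq_of_continuous continuous_fst,
    ← range_comp]
  rfl

section Shift

variable {G S : Type*} [Group G]

def shift (g : G) (s : G → S) : G → S := fun h => s (g⁻¹ * h)

theorem orbitClosure_eq_closure_range [TopologicalSpace S] [DiscreteTopology S] (s : G → S) :
    orbitClosure s = closure (range fun g : G => shift g s) := by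
  obtain rfl := DiscreteTopology.eq_bot (α := S)
  unfold orbitClosure
  congr 1
  ext p
  exact ⟨fun ⟨g, hg⟩ => ⟨g, hg.symm⟩, fun ⟨g, hg⟩ => ⟨g, hg.symm⟩⟩

variable {A : Type*} {M N : Set G}

theorem nuca_shift (g : G) (s : G → (M → A) → A) (x : G → A) :
    nuca M (shift g s) (shift g x) = shift g (nuca M s x) := by
  funext h
  simp only [nuca, shift, mul_assoc]

theorem Function.LeftInverse.nuca_shift {s : G → (M → A) → A} {t : G → (N → A) → A}
    (hst : LeftInverse (nuca N t) (nuca M s)) (g : G) :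
    LeftInverse (nuca N (shift g t)) (nuca M (shift g s)) := by
  intro x
  have hx : x = shift g (shift g⁻¹ x) := by
    funext h
    simp only [shift, inv_inv, mul_inv_cancel_left]
  rw [hx, _root_.nuca_shift, _root_.nuca_shift, hst]

end Shift

section Closedness

variable {G A : Type*} [Group G] {M N : Set G}
  [TopologicalSpace ((M → A) → A)] [DiscreteTopology ((M → A) → A)]
  [TopologicalSpace ((N → A) → A)] [DiscreteTopology ((N → A) → A)]

theorem isLocallyConstant_nuca_nuca_apply (hN : N.Finite) (x : G → A) (g : G) :
    IsLocallyConstant fun pq : (G → (M → A) → A) × (G → (N → A) → A) =>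
      nuca N pq.2 (nuca M pq.1 x) g := by
  have : Finite N := hN.to_subtype
  have hread : Continuous fun pq : (G → (M → A) → A) × (G → (N → A) → A) =>
      (pq.2 g, fun n : N => pq.1 (g * n)) :=
    ((continuous_apply g).comp continuous_snd).prodMk
      (continuous_pi fun n => (continuous_apply _).comp continuous_fst)
  exact (IsLocallyConstant.of_discrete fun u : ((N → A) → A) × (N → (M → A) → A) =>
    u.1 fun n => u.2 n fun m => x (g * n * m)).comp_continuous hread

theorem isClosed_setOf_leftInverse_nuca (hN : N.Finite) :
    IsClosed {pq : (G → (M → A) → A) × (G → (N → A) → A) |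
      LeftInverse (nuca N pq.2) (nuca M pq.1)} := by
  simp only [LeftInverse, funext_iff, ofPred_forall]
  exact isClosed_iInter fun x => isClosed_iInter fun g =>
    (isLocallyConstant_nuca_nuca_apply hN x g).isClosed_fiber (x g)

end Closedness

theorem exists_mem_orbitClosure_leftInverse_rightInverse {G A : Type*} [Group G] [Finite A]
    {M N : Set G} (hM : M.Finite) (hN : N.Finite)
    {s : G → (M → A) → A} {t : G → (N → A) → A}
    (hts : LeftInverse (nuca N t) (nuca M s)) (hst : RightInverse (nuca N t) (nuca M s))
    {p : G → (M → A) → A} (hp : p ∈ orbitClosure s) :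
    ∃ q ∈ orbitClosure t, LeftInverse (nuca N q) (nuca M p) ∧
      RightInverse (nuca N q) (nuca M p) := by
  have : Finite N := hN.to_subtype
  let : TopologicalSpace ((M → A) → A) := ⊥
  let : TopologicalSpace ((N → A) → A) := ⊥
  have : DiscreteTopology ((M → A) → A) := ⟨rfl⟩
  have : DiscreteTopology ((N → A) → A) := ⟨rfl⟩
  set C := closure (range fun g : G => (shift g s, shift g t))
  have hC : C ⊆ {pq | LeftInverse (nuca N pq.2) (nuca M pq.1)} ∩
      {pq | RightInverse (nuca N pq.2) (nuca M pq.1)} :=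
    closure_minimal (range_subset_iff.2 fun g => ⟨hts.nuca_shift g, LeftInverse.nuca_shift hst g⟩)
      ((isClosed_setOf_leftInverse_nuca hN).inter
        ((isClosed_setOf_leftInverse_nuca hM).preimage continuous_swap))
  rw [orbitClosure_eq_closure_range] at hp
  obtain ⟨⟨p, q⟩, hpq, rfl⟩ := 
    closure_range_subset_image_fst_closure (shift · s) (shift · t) hp
  refine ⟨q, ?_, hC hpq⟩
  rw [orbitClosure_eq_closure_range]
  exact map_mem_closure continuous_snd hpq (range_subset_iff.2 fun g => mem_range_self g)

theorem stmt4_general {G A : Type*} [Group G] [Finite A]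
    (M : Set G) (hM : M.Finite) (s : G → (M → A) → A)
    (hinv : ∃ N : Set G, N.Finite ∧ ∃ t : G → (N → A) → A,
      (∀ x, nuca N t (nuca M s x) = x) ∧ (∀ x, nuca M s (nuca N t x) = x)) :
    ∃ N : Set G, N.Finite ∧ ∃ t : G → (N → A) → A,
      ∀ p ∈ orbitClosure s, ∃ q ∈ orbitClosure t,
        (∀ x, nuca N q (nuca M p x) = x) ∧ (∀ x, nuca M p (nuca N q x) = x) := by
  obtain ⟨N, hN, t, hts, hst⟩ := hinv
  exact ⟨N, hN, t, fun p hp => exists_mem_orbitClosure_leftInverse_rightInverse hM hN hts hst hp⟩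

/-- Over a countable group and a finite alphabet, every invertible NUCA with
finite memory (bijective with inverse a NUCA of finite memory) is stably
invertible. -/
theorem stmt4 {G A : Type*} [Group G] [Countable G] [Finite A]
    (M : Set G) (hM : M.Finite) (s : G → (M → A) → A)
    (hinv : ∃ N : Set G, N.Finite ∧ ∃ t : G → (N → A) → A,
      (∀ x, nuca N t (nuca M s x) = x) ∧ (∀ x, nuca M s (nuca N t x) = x)) :
    ∃ N : Set G, N.Finite ∧ ∃ t : G → (N → A) → A,
      ∀ p ∈ orbitClosure s, ∃ q ∈ orbitClosure t,
        (∀ x, nuca N q (nuca M p x) = x) ∧ (∀ x, nuca M p (nuca N q x) = x) :=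
  stmt4_general M hM s hinv
end

section
/- Let G be a group, A a finite alphabet, M ⊆ G finite, S = A^(A^M). Suppose s ∈ S^G is asymptotically constant and σ_s is stably injective. Then there exist a finite subset N ⊆ G and an asymptotically constant configuration t ∈ T^G, T = A^(A^N), such that σ_t ∘ σ_s = Id on A^G. -/
/-- A configuration is asymptotically constant if it agrees with a constant
configuration outside a finite set. -/
def AsympConst {G S : Type*} (s : G → S) : Prop :=
  ∃ c : S, {g : G | s g ≠ c}.Finite

open scoped Pointwise

theorem AsympConst.comp {G S T : Type*} {s : G → S} (hs : AsympConst s) (f : S → T) :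
    AsympConst (f ∘ s) := by
  obtain ⟨c, hc⟩ := hs
  exact ⟨f c, hc.subset fun g hg h => hg (congrArg f h)⟩

section

variable {G A : Type*} [Group G]

theorem AsympConst.window {S : Type*} {s : G → S} (hs : AsympConst s) {N : Set G}
    (hN : N.Finite) : AsympConst fun g (n : N) => s (g * n) := by
  obtain ⟨c, hc⟩ := hs
  refine ⟨fun _ => c, (hc.mul hN.inv).subset fun g hg => ?_⟩
  obtain ⟨n, hn⟩ : ∃ n : N, s (g * n) ≠ c := by
    by_contra! h
    exact hg (funext h)
  exact ⟨g * n, hn, (n : G)⁻¹, by simp, mul_inv_cancel_right g n⟩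

theorem shift_mem_orbitClosure {S : Type*} (s : G → S) (g : G) :
    (fun h => s (g * h)) ∈ orbitClosure s := by
  let _ : TopologicalSpace S := ⊥
  exact subset_closure ⟨g⁻¹, by simp only [inv_inv]⟩

theorem nuca_mul_apply (M : Set G) (s : G → (M → A) → A) (x : G → A) (g h : G) :
    nuca M s x (g * h) = nuca M (fun h => s (g * h)) (fun h => x (g * h)) h := by
  simp only [nuca, mul_assoc]

theorem continuous_nuca_apply {M : Set G} [Finite M] [TopologicalSpace A] [DiscreteTopology A]
    [TopologicalSpace ((M → A) → A)] [DiscreteTopology ((M → A) → A)] (e : G) :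
    Continuous fun z : (G → (M → A) → A) × (G → A) => nuca M z.1 z.2 e := by
  have hwindow : Continuous fun z : (G → (M → A) → A) × (G → A) =>
      (z.1 e, fun m : M => z.2 (e * m)) := by fun_prop
  exact continuous_of_discreteTopology (f := fun q : ((M → A) → A) × (M → A) => q.1 q.2)
    |>.comp hwindow

def IsDecodingWindow (M : Set G) (P : Set (G → (M → A) → A)) (N : Set G) : Prop :=
  ∀ p ∈ P, ∀ x y : G → A, (∀ n ∈ N, nuca M p x n = nuca M p y n) → x 1 = y 1

theorem IsDecodingWindow.mono {M N N' : Set G} {P : Set (G → (M → A) → A)}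
    (h : IsDecodingWindow M P N) (hN : N ⊆ N') : IsDecodingWindow M P N' :=
  fun p hp x y hxy => h p hp x y fun n hn => hxy n (hN hn)

theorem exists_finite_isDecodingWindow_orbitClosure [Finite A] {M : Set G} (hM : M.Finite)
    (s : G → (M → A) → A) (hinj : ∀ p ∈ orbitClosure s, Function.Injective (nuca M p)) :
    ∃ N : Set G, N.Finite ∧ IsDecodingWindow M (orbitClosure s) N := by
  let _ : TopologicalSpace A := ⊥
  have _ : DiscreteTopology A := ⟨rfl⟩
  let _ : TopologicalSpace ((M → A) → A) := ⊥
  have _ : DiscreteTopology ((M → A) → A) := ⟨rfl⟩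
  have _ := hM.to_subtype
  let K : Set ((G → (M → A) → A) × (G → A) × (G → A)) :=
    Prod.fst ⁻¹' orbitClosure s ∩ {z | z.2.1 1 ≠ z.2.2 1}
  let U (e : G) : Set ((G → (M → A) → A) × (G → A) × (G → A)) :=
    {z | nuca M z.1 z.2.1 e ≠ nuca M z.1 z.2.2 e}
  have hK : IsCompact K := by
    have hne : IsClosed {z : (G → (M → A) → A) × (G → A) × (G → A) | z.2.1 1 ≠ z.2.2 1} :=
      (isClosed_discrete {a : A × A | a.1 ≠ a.2}).preimage
        (f := fun z : (G → (M → A) → A) × (G → A) × (G → A) => (z.2.1 1, z.2.2 1)) (by fun_prop)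
    exact ((isClosed_closure.preimage continuous_fst).inter hne).isCompact
  have hU (e : G) : IsOpen (U e) :=
    isOpen_discrete {a : A × A | a.1 ≠ a.2} |>.preimage <|
      ((continuous_nuca_apply e).comp (continuous_fst.prodMk (by fun_prop))).prodMk
        ((continuous_nuca_apply e).comp (continuous_fst.prodMk (by fun_prop)))
  have hKU : K ⊆ ⋃ e, U e := by
    rintro z ⟨hp, hne⟩
    by_contra h
    simp only [Set.mem_iUnion, Set.mem_ofPred_eq, not_exists, not_not, U] at h
    exact hne (congrFun (hinj _ hp (funext h)) 1)
  obtain ⟨E, hE⟩ := hK.elim_finite_subcover U hU hKU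
  refine ⟨E, E.finite_toSet, fun p hp x y hxy => by_contra fun hne => ?_⟩
  obtain ⟨e, he, hpe⟩ := Set.mem_iUnion₂.1 (hE (show (p, x, y) ∈ K from ⟨hp, hne⟩))
  exact hpe (hxy e he)

-- The fallback `u ⟨1, h1⟩`, never reached on images of `σ_q`, spares us assuming `Nonempty A`.
open Classical in
noncomputable def windowInverse {M N : Set G} (h1 : (1 : G) ∈ N) (q : N → (M → A) → A)
    (u : N → A) : A :=
  if h : ∃ x : G → A, ∀ n : N, q n (fun m => x (n * m)) = u n then h.choose 1 else u ⟨1, h1⟩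

theorem nuca_windowInverse_nuca {M N : Set G} (h1 : (1 : G) ∈ N) {s : G → (M → A) → A}
    (hN : IsDecodingWindow M (orbitClosure s) N) (x : G → A) :
    nuca N (fun g => windowInverse h1 fun n : N => s (g * n)) (nuca M s x) = x := by
  funext g
  set p : G → (M → A) → A := fun h => s (g * h)
  set y : G → A := fun h => x (g * h)
  have hu : (fun n : N => nuca M s x (g * n)) = fun n : N => nuca M p y n :=
    funext fun (n : N) => nuca_mul_apply M s x g n
  have hex : ∃ z : G → A, ∀ n : N, p n (fun m => z (n * m)) = nuca M p y n := ⟨y, fun _ => rfl⟩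
  show windowInverse h1 (fun n : N => p n) (fun n : N => nuca M s x (g * n)) = x g
  rw [hu, windowInverse, dif_pos hex]
  simpa [y] using hN p (shift_mem_orbitClosure s g) _ y fun n hn => hex.choose_spec ⟨n, hn⟩

end

/-- A stably injective, asymptotically constant NUCA with finite memory over a
finite alphabet admits an asymptotically constant left inverse NUCA with
finite memory. -/
theorem stmt5 {G A : Type*} [Group G] [Finite A]
    (M : Set G) (hM : M.Finite) (s : G → (M → A) → A)
    (hconst : AsympConst s)
    (hinj : ∀ p ∈ orbitClosure s, Function.Injective (nuca M p)) :
    ∃ N : Set G, N.Finite ∧ ∃ t : G → (N → A) → A,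
      AsympConst t ∧ ∀ x, nuca N t (nuca M s x) = x := by
  obtain ⟨E, hE, hdec⟩ := exists_finite_isDecodingWindow_orbitClosure hM s hinj
  exact ⟨insert 1 E, hE.insert 1, _,
    (hconst.window (hE.insert 1)).comp (windowInverse (Set.mem_insert 1 E)),
    nuca_windowInverse_nuca _ (hdec.mono (Set.subset_insert 1 E))⟩
end

section
/- Let G be a group, A an alphabet, M ⊆ G finite, S = A^(A^M). Suppose s, t ∈ S^G satisfy σ_t ∘ σ_s = Id and s has uniformly bounded singularity. Then for every finite E ⊆ G there exist asymptotically constant configurations p, q ∈ S^G with p|_E = s|_E, q|_E = t|_E, and σ_q ∘ σ_p = Id. -/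
open Pointwise

/-- `s` has uniformly bounded singularity: for every finite symmetric `E ∋ 1`
there is a finite `F ⊇ E` such that `s` is constant on `FE ∖ F`. -/
def UBS {G S : Type*} [Group G] (s : G → S) : Prop :=
  ∀ E : Set G, E.Finite → (1 : G) ∈ E → E⁻¹ = E →
    ∃ F : Set G, F.Finite ∧ E ⊆ F ∧ ∃ c : S, ∀ g ∈ (F * E) \ F, s g = c

/-- If `σ_t ∘ σ_s = Id` and `s` has uniformly bounded singularity, then for
every finite `E ⊆ G` there are asymptotically constant `p, q` agreeing with
`s, t` on `E` such that `σ_q ∘ σ_p = Id`. -/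
theorem stmt6 {G A : Type*} [Group G] (M : Set G) (hM : M.Finite)
    (s t : G → (M → A) → A)
    (hts : ∀ x, nuca M t (nuca M s x) = x) (hs : UBS s) :
    ∀ E : Set G, E.Finite →
      ∃ p q : G → (M → A) → A, AsympConst p ∧ AsympConst q ∧
        (∀ g ∈ E, p g = s g) ∧ (∀ g ∈ E, q g = t g) ∧
        ∀ x, nuca M q (nuca M p x) = x := by
  classical
  intro E hE
  by_cases htriv : ∀ a b : A, a = b
  · refine ⟨s, t, ⟨s 1, ?_⟩, ⟨t 1, ?_⟩, fun g _ => rfl, fun g _ => rfl, hts⟩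
    · have h : {g : G | s g ≠ s 1} = ∅ := by
        ext g
        simp only [Set.mem_setOf_eq, Set.mem_empty_iff_false, iff_false, not_not]
        funext y; exact htriv _ _
      rw [h]; exact Set.finite_empty
    · have h : {g : G | t g ≠ t 1} = ∅ := by
        ext g
        simp only [Set.mem_setOf_eq, Set.mem_empty_iff_false, iff_false, not_not]
        funext y; exact htriv _ _
      rw [h]; exact Set.finite_empty
  · push_neg at htriv
    obtain ⟨a, b, hab⟩ := htriv
    -- there exist m₁ m₂ ∈ M with m₁ * m₂ = 1
    have hmm : ∃ m₁ : M, ∃ m₂ : M, (m₁ : G) * m₂ = 1 := by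
      by_contra hno
      push_neg at hno
      apply hab
      set x : G → A := fun h => if h = 1 then a else b with hx
      have h1 := congrFun (hts x) 1
      have h2 := congrFun (hts (fun _ => b)) 1
      have hsame : nuca M t (nuca M s x) 1 = nuca M t (nuca M s (fun _ => b)) 1 := by
        show t 1 _ = t 1 _
        congr 1; funext m
        show s _ _ = s _ _
        congr 1; funext m'
        show x (1 * (m : G) * (m' : G)) = b
        rw [hx]
        simp only [one_mul]
        rw [if_neg (hno m m')]
      have hxa : x 1 = a := if_pos rfl
      calc a = x 1 := hxa.symm
        _ = nuca M t (nuca M s x) 1 := h1.symm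
        _ = nuca M t (nuca M s (fun _ => b)) 1 := hsame
        _ = b := h2
    obtain ⟨m₁, m₂, hm12⟩ := hmm
    -- symmetric neighbourhood N
    set N : Set G := insert 1 (M ∪ M⁻¹) with hNdef
    have hNfin : N.Finite := (hM.union hM.inv).insert 1
    have h1N : (1 : G) ∈ N := Set.mem_insert _ _
    have hMN : ∀ m : M, (m : G) ∈ N := fun m => Set.mem_insert_of_mem _ (Or.inl m.2)
    have hNinv : ∀ g ∈ N, g⁻¹ ∈ N := by
      intro g hg
      rw [hNdef, Set.mem_insert_iff, Set.mem_union] at hg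
      rcases hg with rfl | hg | hg
      · simpa using h1N
      · exact Set.mem_insert_of_mem _ (Or.inr (Set.inv_mem_inv.mpr hg))
      · exact Set.mem_insert_of_mem _ (Or.inl (Set.mem_inv.mp hg))
    set E' : Set G := insert 1 ((E ∪ E⁻¹) ∪ N * N * N) with hE'def
    have hE'fin : E'.Finite := ((hE.union hE.inv).union ((hNfin.mul hNfin).mul hNfin)).insert 1
    have h1E' : (1 : G) ∈ E' := Set.mem_insert _ _
    have hNNNsub : N * N * N ⊆ E' := fun g hg => Set.mem_insert_of_mem _ (Or.inr hg)
    have hNNNinv : ∀ g ∈ N * N * N, g⁻¹ ∈ N * N * N := by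
      intro g hg
      rw [Set.mem_mul] at hg
      obtain ⟨u, hu, n3, hn3, rfl⟩ := hg
      rw [Set.mem_mul] at hu
      obtain ⟨n1, hn1, n2, hn2, rfl⟩ := hu
      have heq : (n1 * n2 * n3)⁻¹ = n3⁻¹ * n2⁻¹ * n1⁻¹ := by group
      rw [heq]
      exact Set.mul_mem_mul (Set.mul_mem_mul (hNinv _ hn3) (hNinv _ hn2)) (hNinv _ hn1)
    have hE'sym : ∀ g ∈ E', g⁻¹ ∈ E' := by
      intro g hg
      rw [hE'def, Set.mem_insert_iff, Set.mem_union, Set.mem_union] at hg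
      rcases hg with rfl | (hg | hg) | hg
      · simpa using h1E'
      · exact Set.mem_insert_of_mem _ (Or.inl (Or.inr (Set.inv_mem_inv.mpr hg)))
      · exact Set.mem_insert_of_mem _ (Or.inl (Or.inl (Set.mem_inv.mp hg)))
      · exact Set.mem_insert_of_mem _ (Or.inr (hNNNinv _ hg))
    have hE'inv : E'⁻¹ = E' := by
      apply Set.eq_of_subset_of_subset
      · intro g hg
        have := hE'sym g⁻¹ (Set.mem_inv.mp hg)
        simpa using this
      · intro g hg
        exact Set.mem_inv.mpr (hE'sym g hg)
    obtain ⟨F, hFfin, hE'F, c, hc⟩ := hs E' hE'fin h1E' hE'inv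
    have hEF : E ⊆ F := fun g hg => hE'F (Set.mem_insert_of_mem _ (Or.inl (Or.inl hg)))
    have hFsubFN : F ⊆ F * N := fun g hg => by
      simpa using Set.mul_mem_mul hg h1N
    have hFNsubFNN : F * N ⊆ F * N * N := fun g hg => by
      simpa using Set.mul_mem_mul hg h1N
    have hstep : ∀ (g : G) (m : M), g * (m : G) ∈ F → g ∈ F * N := by
      intro g m h
      simpa using Set.mul_mem_mul h (hNinv _ (hMN m))
    have hup : ∀ g ∈ F * N * N, ∀ m : M, g * (m : G) ∈ F * E' := by
      intro g hg m
      have h1 : g * (m : G) ∈ F * N * N * N := Set.mul_mem_mul hg (hMN m)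
      have h2 : F * N * N * N = F * (N * N * N) := by
        rw [mul_assoc F N N, mul_assoc F (N * N) N]
      rw [h2] at h1
      exact Set.mul_subset_mul_left hNNNsub h1
    by_cases hdeep : F * N * N ⊆ F * N
    · -- "saturated" case: use the shift pair
      set c' : (M → A) → A := fun y => y m₂ with hc'
      set d' : (M → A) → A := fun y => y m₁ with hd'
      set F' : Set G := F * N with hF'
      have hF'fin : F'.Finite := hFfin.mul hNfin
      have hF'N : ∀ g ∈ F', ∀ m : M, g * (m : G) ∈ F' :=
        fun g hg m => hdeep (Set.mul_mem_mul hg (hMN m))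
      have hout : ∀ g, g ∉ F' → ∀ m : M, g * (m : G) ∉ F' := by
        intro g hg m h
        exact hg (by simpa using hdeep (Set.mul_mem_mul h (hNinv _ (hMN m))))
      refine ⟨fun g => if g ∈ F' then s g else c',
              fun g => if g ∈ F' then t g else d', ⟨c', ?_⟩, ⟨d', ?_⟩, ?_, ?_, ?_⟩
      · refine hF'fin.subset fun g hg => ?_
        by_contra h
        exact hg (if_neg h)
      · refine hF'fin.subset fun g hg => ?_
        by_contra h
        exact hg (if_neg h)
      · intro g hg; exact if_pos (hFsubFN (hEF hg))
      · intro g hg; exact if_pos (hFsubFN (hEF hg))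
      · intro x
        funext g
        by_cases hg : g ∈ F'
        · show (if g ∈ F' then t g else d') _ = x g
          rw [if_pos hg]
          have harg : (fun m : M => nuca M (fun g => if g ∈ F' then s g else c') x (g * (m : G)))
              = fun m : M => nuca M s x (g * (m : G)) := by
            funext m
            show (if g * (m : G) ∈ F' then s (g * (m : G)) else c')
                (fun m' : M => x (g * (m : G) * (m' : G))) = _
            rw [if_pos (hF'N g hg m)]
            rfl
          rw [harg]
          exact congrFun (hts x) g
        · show (if g ∈ F' then t g else d') _ = x g
          rw [if_neg hg]
          have harg : (fun m : M => nuca M (fun g => if g ∈ F' then s g else c') x (g * (m : G)))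
              = fun m : M => x (g * (m : G) * (m₂ : G)) := by
            funext m
            show (if g * (m : G) ∈ F' then s (g * (m : G)) else c')
                (fun m' : M => x (g * (m : G) * (m' : G))) = _
            rw [if_neg (hout g hg m)]
          rw [harg]
          show x (g * (m₁ : G) * (m₂ : G)) = x g
          rw [mul_assoc, hm12, mul_one]
    · -- deep point case
      rw [Set.not_subset] at hdeep
      obtain ⟨g₀, hg₀mem, hg₀not⟩ := hdeep
      have hg₀notF : ∀ m : M, g₀ * (m : G) ∉ F := fun m h => hg₀not (hstep g₀ m h)
      have hsg0 : ∀ m : M, s (g₀ * (m : G)) = c :=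
        fun m => hc _ ⟨hup g₀ hg₀mem m, hg₀notF m⟩
      have hps : ∀ h ∈ F * E', (if h ∈ F then s h else c) = s h := by
        intro h hh
        by_cases hF : h ∈ F
        · rw [if_pos hF]
        · rw [if_neg hF, hc h ⟨hh, hF⟩]
      refine ⟨fun g => if g ∈ F then s g else c,
              fun g => if g ∈ F * N * N then t g else t g₀, ⟨c, ?_⟩, ⟨t g₀, ?_⟩, ?_, ?_, ?_⟩
      · refine hFfin.subset fun g hg => ?_
        by_contra h
        exact hg (if_neg h)
      · refine ((hFfin.mul hNfin).mul hNfin).subset fun g hg => ?_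
        by_contra h
        exact hg (if_neg h)
      · intro g hg; exact if_pos (hEF hg)
      · intro g hg; exact if_pos (hFNsubFNN (hFsubFN (hEF hg)))
      · intro x
        funext g
        by_cases hg : g ∈ F * N * N
        · show (if g ∈ F * N * N then t g else t g₀) _ = x g
          rw [if_pos hg]
          have harg : (fun m : M => nuca M (fun g => if g ∈ F then s g else c) x (g * (m : G)))
              = fun m : M => nuca M s x (g * (m : G)) := by
            funext m
            show (if g * (m : G) ∈ F then s (g * (m : G)) else c)
                (fun m' : M => x (g * (m : G) * (m' : G))) = _
            rw [hps _ (hup g hg m)]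
            rfl
          rw [harg]
          exact congrFun (hts x) g
        · show (if g ∈ F * N * N then t g else t g₀) _ = x g
          rw [if_neg hg]
          have hgm : ∀ m : M, g * (m : G) ∉ F := by
            intro m h
            exact hg (hFNsubFNN (hstep g m h))
          set x' : G → A := fun h => x (g * g₀⁻¹ * h) with hx'
          have hkey : t g₀ (fun m : M => s (g₀ * (m : G))
              (fun m' : M => x' (g₀ * (m : G) * (m' : G)))) = x' g₀ := congrFun (hts x') g₀
          have harg : (fun m : M => nuca M (fun g => if g ∈ F then s g else c) x (g * (m : G)))
              = fun m : M => s (g₀ * (m : G)) (fun m' : M => x' (g₀ * (m : G) * (m' : G))) := by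
            funext m
            show (if g * (m : G) ∈ F then s (g * (m : G)) else c)
                (fun m' : M => x (g * (m : G) * (m' : G))) = _
            rw [if_neg (hgm m), hsg0 m]
            congr 1
            funext m'
            rw [hx']
            congr 1
            group
          rw [harg, hkey, hx']
          show x (g * g₀⁻¹ * g₀) = x g
          congr 1
          group
end

section
/- Let G be a finitely generated group, A a finite vector space over a field, M ⊆ G finite. The stable surjunctivity conjecture holds for all linear NUCA A^G → A^G of finite memory with uniformly bounded singularity over G if and only if the stable dual-surjunctivity conjecture holds for such NUCA; i.e., (every stably injective such NUCA is stably invertible) ⟺ (every stably post-surjective such NUCA is stably invertible). -/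
open Pointwise

/-- Two configurations are asymptotic if they agree outside a finite set. -/
def Asymptotic {G A : Type*} (x y : G → A) : Prop :=
  {g : G | x g ≠ y g}.Finite

/-- `σ` is post-surjective. -/
def PostSurj {G A : Type*} (σ : (G → A) → (G → A)) : Prop :=
  ∀ x y : G → A, Asymptotic y (σ x) → ∃ z : G → A, Asymptotic z x ∧ σ z = y

/-- `σ_s` is stably invertible: there are a finite memory `N` and `t` such that
every `p ∈ Σ(s)` has a two-sided inverse `σ_q` with `q ∈ Σ(t)`. -/
def StablyInvertible {G A : Type*} [Group G] (M : Set G)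
    (s : G → (M → A) → A) : Prop :=
  ∃ N : Set G, N.Finite ∧ ∃ t : G → (N → A) → A,
    ∀ p ∈ orbitClosure s, ∃ q ∈ orbitClosure t,
      (∀ x, nuca N q (nuca M p x) = x) ∧ (∀ x, nuca M p (nuca N q x) = x)

/-!
Identify `A` with its dual through the symmetric form `b.toDual` of a basis `b`, and pair
configurations by `⟨x, y⟩ = ∑ᶠ g, b.toDual (x g) (y g)` when one of them is finitely supported.
A linear NUCA `σ_s` with memory `M` then has an adjoint `σ_{s*}` with memory `M⁻¹`, and
adjointness exchanges the two hypotheses. If `σ` is post-surjective, every finitely supported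
`y` is some `σ z` with `z` finitely supported, and `⟨y, u⟩ = ⟨z, σ* u⟩` forces `σ*` to be
injective. If `σ` is injective, compactness of `A^G` shows that `⟨·, y⟩` depends only on finitely
many coordinates of `σ ·`, so it equals `⟨σ ·, z⟩` for a finitely supported `z`, i.e. `σ* z = y`.
Finally `s ↦ s*` is a continuous shift-equivariant sliding block code, so it maps `Σ(s)` onto
`Σ(s*)` and preserves uniformly bounded singularity, and inverses dualize: either conjecture
applied to `s*` yields the other one for `s`.
-/

open Function

section Cylinders

variable {G S : Type*} [TopologicalSpace S] [DiscreteTopology S]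

theorem isOpen_of_forall_eqOn {D : Set (G → S)} {T : Set G} (hT : T.Finite)
    (hD : ∀ x x', Set.EqOn x x' T → x ∈ D → x' ∈ D) : IsOpen D := by
  refine isOpen_iff_mem_nhds.2 fun x hx => ?_
  filter_upwards [set_pi_mem_nhds hT fun g _ => (isOpen_discrete {x g}).mem_nhds rfl] with x' hx'
  exact hD x x' (fun g hg => (hx' g hg).symm) hx

theorem isClosed_of_forall_eqOn {D : Set (G → S)} {T : Set G} (hT : T.Finite)
    (hD : ∀ x x', Set.EqOn x x' T → x ∈ D → x' ∈ D) : IsClosed D :=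
  isOpen_compl_iff.1 <| isOpen_of_forall_eqOn hT fun x x' hxx' hx hx' => hx (hD x' x hxx'.symm hx')

theorem continuous_of_forall_eqOn {X : Type*} [TopologicalSpace X] {f : (G → S) → X} {T : Set G}
    (hT : T.Finite) (hf : ∀ x x', Set.EqOn x x' T → f x = f x') : Continuous f :=
  continuous_def.2 fun _ _ => isOpen_of_forall_eqOn hT fun x x' hxx' hx => by
    rwa [Set.mem_preimage, ← hf x x' hxx']

end Cylinders

section OrbitClosure

variable {G S S' : Type*} [Group G]

theorem orbitClosure_eq_closure [TopologicalSpace S] [DiscreteTopology S] (s : G → S) :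
    orbitClosure s = closure {p | ∃ g : G, p = fun h => s (g⁻¹ * h)} := by
  obtain rfl := DiscreteTopology.eq_bot (α := S)
  rfl

theorem forall_apply_of_mem_orbitClosure {P : S → Prop} {s p : G → S} (hs : ∀ g, P (s g))
    (hp : p ∈ orbitClosure s) (g : G) : P (p g) := by
  let : TopologicalSpace S := ⊥
  have : DiscreteTopology S := ⟨rfl⟩
  rw [orbitClosure_eq_closure] at hp
  refine closure_minimal ?_ ((isClosed_discrete {a | P a}).preimage (continuous_apply g)) hp
  rintro _ ⟨g', rfl⟩
  exact hs _

theorem image_orbitClosure [TopologicalSpace S] [DiscreteTopology S] [Finite S]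
    [TopologicalSpace S'] [DiscreteTopology S']
    {Φ : (G → S) → G → S'} (hΦ : Continuous Φ)
    (hΦg : ∀ (p : G → S) (g : G), Φ (fun h => p (g⁻¹ * h)) = fun h => Φ p (g⁻¹ * h))
    (s : G → S) : Φ '' orbitClosure s = orbitClosure (Φ s) := by
  have horbit : Φ '' {p | ∃ g : G, p = fun h => s (g⁻¹ * h)} =
      {q | ∃ g : G, q = fun h => Φ s (g⁻¹ * h)} := by
    ext q
    constructor
    · rintro ⟨_, ⟨g, rfl⟩, rfl⟩
      exact ⟨g, hΦg s g⟩
    · rintro ⟨g, rfl⟩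
      exact ⟨_, ⟨g, rfl⟩, hΦg s g⟩
  rw [orbitClosure_eq_closure, orbitClosure_eq_closure, ← horbit]
  exact (image_closure_subset_closure_image hΦ).antisymm <|
    closure_minimal (Set.image_mono subset_closure) (isClosed_closure.isCompact.image hΦ).isClosed

end OrbitClosure

theorem UBS.of_window {G S S' : Type*} [Group G] {s : G → S} {t : G → S'} {N : Set G}
    (hN : N.Finite) (hs : UBS s)
    (ht : ∀ h h', (∀ n ∈ N, s (h * n) = s (h' * n)) → t h = t h') : UBS t := by
  intro E hE hE1 hEinv
  set E' := E ∪ (N ∪ N⁻¹) with hE'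
  have hE'fin : E'.Finite := hE.union (hN.union hN.inv)
  have hE'1 : (1 : G) ∈ E' := Or.inl hE1
  have hE'inv : E'⁻¹ = E' := by simp [hE', Set.union_inv, hEinv, Set.union_comm]
  have h11 : (1 : G) ∈ E' * E' := by simpa using Set.mul_mem_mul hE'1 hE'1
  obtain ⟨F, hF, hE'F, c, hc⟩ := hs (E' * E' * E') ((hE'fin.mul hE'fin).mul hE'fin)
    (by simpa using Set.mul_mem_mul h11 hE'1) (by simp [mul_inv_rev, hE'inv, mul_assoc])
  -- windows at the boundary of `F * E'` lie in the boundary of `F`, where `s` is constant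
  have hwin : ∀ g ∈ (F * E' * E) \ (F * E'), ∀ n ∈ N, s (g * n) = c := by
    rintro g ⟨hg, hgF⟩ n hn
    obtain ⟨_, hfe', e, he, rfl⟩ := Set.mem_mul.1 hg
    obtain ⟨f, hf, e', he', rfl⟩ := Set.mem_mul.1 hfe'
    have hn' : n⁻¹ ∈ E' := Or.inr (Or.inr (Set.inv_mem_inv.2 hn))
    refine hc _ ⟨?_, fun hF' => hgF ?_⟩
    · rw [show f * e' * e * n = f * (e' * e * n) by group]
      exact Set.mul_mem_mul hf
        (Set.mul_mem_mul (Set.mul_mem_mul he' (Or.inl he)) (Or.inr (Or.inl hn)))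
    · simpa using Set.mul_mem_mul hF' hn'
  refine ⟨F * E', hF.mul hE'fin, ?_, ?_⟩
  · exact (Set.subset_union_left.trans (Set.subset_mul_right _ h11)).trans
      (hE'F.trans (Set.subset_mul_left F hE'1))
  by_cases hne : ((F * E' * E) \ (F * E')).Nonempty
  · obtain ⟨g₀, hg₀⟩ := hne
    exact ⟨t g₀, fun g hg => ht g g₀ fun n hn => by rw [hwin g hg n hn, hwin g₀ hg₀ n hn]⟩
  · exact ⟨t 1, fun g hg => absurd ⟨g, hg⟩ hne⟩

namespace Module.Basis

variable {k A ι : Type*} [CommRing k] [AddCommGroup A] [Module k A] [DecidableEq ι]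
  (b : Basis ι k A)

theorem toDual_comm (a a' : A) : b.toDual a a' = b.toDual a' a := by
  have : b.toDual.flip = b.toDual :=
    b.ext fun i => b.ext fun j => by simp [toDual_apply, eq_comm]
  exact LinearMap.congr_fun₂ this a' a

variable [Fintype ι]

/-- The transpose of `f` for the form `b.toDual`, written through `b` so that it is linear even
when `f` is not. -/
noncomputable def transpose (f : A → A) : A →ₗ[k] A :=
  ∑ j, (b.toDual (f (b j))).smulRight (b j)

theorem toDual_transpose {f : A → A} (hf : IsLinearMap k f) (a a' : A) :
    b.toDual a (b.transpose f a') = b.toDual (f a) a' := by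
  have : b.toDual.flip (b.transpose f a') = (b.toDual.flip a').comp (hf.mk' f) :=
    b.ext fun i => by simp [transpose, toDual_apply, mul_ite]
  exact LinearMap.congr_fun this a

end Module.Basis

section ConfigPairing

variable {k A ι G : Type*} [CommRing k] [AddCommGroup A] [Module k A] [DecidableEq ι]
  (b : Module.Basis ι k A)

/-- Only meaningful when `x` or `y` is finitely supported: otherwise `∑ᶠ` returns `0`. -/
noncomputable def configPairing (x y : G → A) : k :=
  ∑ᶠ g, b.toDual (x g) (y g)

theorem configPairing_comm (x y : G → A) : configPairing b x y = configPairing b y x :=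
  finsum_congr fun _ => b.toDual_comm _ _

theorem hasFiniteSupport_toDual_apply {x y : G → A}
    (h : HasFiniteSupport x ∨ HasFiniteSupport y) :
    HasFiniteSupport fun g => b.toDual (x g) (y g) := by
  rcases h with h | h
  · exact h.subset fun g hg hx => hg (by simp [hx])
  · exact h.subset fun g hg hy => hg (by simp [hy])

theorem configPairing_congr_left {x x' y : G → A} (h : Set.EqOn x x' (support y)) :
    configPairing b x y = configPairing b x' y := by
  refine finsum_congr fun g => ?_
  by_cases hg : y g = 0
  · simp [hg]
  · rw [h hg]

theorem configPairing_eq_sum {x y : G → A} {T : Finset G} (hT : support y ⊆ T) :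
    configPairing b x y = ∑ g ∈ T, b.toDual (x g) (y g) :=
  finsum_eq_sum_of_support_subset _ fun g hg => hT fun hy => hg (by simp [hy])

theorem configPairing_single_left [DecidableEq G] (g : G) (a : A) (y : G → A) :
    configPairing b (Pi.single g a) y = b.toDual a (y g) :=
  (finsum_eq_single _ g fun g' hg' => by simp [hg']).trans (by simp)

theorem configPairing_sum_single_right [DecidableEq G] {ι' : Type*} (s : Finset ι') (g : ι' → G)
    (a : ι' → A) (x : G → A) :
    configPairing b x (∑ i ∈ s, Pi.single (g i) (a i)) = ∑ i ∈ s, b.toDual (x (g i)) (a i) := by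
  simp only [configPairing, Finset.sum_apply, map_sum]
  rw [finsum_sum_comm]
  · refine Finset.sum_congr rfl fun i _ => (finsum_eq_single _ (g i) fun g' hg' => ?_).trans ?_
    · simp [hg']
    · simp
  · exact fun i _ => hasFiniteSupport_toDual_apply b <| Or.inr <|
      (Set.finite_singleton (g i)).subset Pi.support_single_subset

theorem eq_of_forall_configPairing_eq {u v : G → A}
    (h : ∀ x, HasFiniteSupport x → configPairing b x u = configPairing b x v) : u = v := by
  classical
  funext g
  refine b.toDual_injective (LinearMap.ext fun a => ?_)
  have := h (Pi.single g a) ((Set.finite_singleton g).subset Pi.support_single_subset)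
  rwa [configPairing_single_left, configPairing_single_left, b.toDual_comm,
    b.toDual_comm a] at this

end ConfigPairing

section Nuca

variable {k A G : Type*} [CommRing k] [AddCommGroup A] [Module k A] [Group G] {M : Set G}

theorem isLinearMap_nuca {p : G → (M → A) → A} (hp : ∀ g, IsLinearMap k (p g)) :
    IsLinearMap k (nuca M p) :=
  ⟨fun _ _ => funext fun g => (hp g).map_add _ _, fun c _ => funext fun g => (hp g).map_smul c _⟩

theorem isLinearMap_of_isLinearMap_nuca {p : G → (M → A) → A} (hp : IsLinearMap k (nuca M p))
    (g : G) : IsLinearMap k (p g) := by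
  have hr : Surjective fun (x : G → A) (m : M) => x (g * m) :=
    ((mul_right_injective g).comp Subtype.val_injective).surjective_comp_right
  constructor
  · intro w w'
    obtain ⟨x, rfl⟩ := hr w
    obtain ⟨x', rfl⟩ := hr w'
    exact congrFun (hp.map_add x x') g
  · intro c w
    obtain ⟨x, rfl⟩ := hr w
    exact congrFun (hp.map_smul c x) g

theorem Function.HasFiniteSupport.nuca {p : G → (M → A) → A} (hM : M.Finite)
    (hp : ∀ g, p g 0 = 0) {x : G → A} (hx : HasFiniteSupport x) :
    HasFiniteSupport (nuca M p x) := by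
  refine (hx.mul hM.inv).subset fun g hg => ?_
  by_contra hgx
  refine hg ((congrArg (p g) (funext fun m => ?_)).trans (hp g))
  by_contra hm
  exact hgx (by
    simpa using Set.mul_mem_mul (show (g * m : G) ∈ support x from hm) (Set.inv_mem_inv.2 m.2))

end Nuca

section Dual

variable {k A ι G : Type*} [CommRing k] [AddCommGroup A] [Module k A] [DecidableEq ι]
  (b : Module.Basis ι k A)

def IsAdjoint (S T : (G → A) → G → A) : Prop :=
  ∀ x y, HasFiniteSupport x ∨ HasFiniteSupport y →
    configPairing b (S x) y = configPairing b x (T y)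

variable {b}

theorem IsAdjoint.symm {S T : (G → A) → G → A} (h : IsAdjoint b S T) : IsAdjoint b T S :=
  fun x y hxy => by rw [configPairing_comm, ← h y x hxy.symm, configPairing_comm]

theorem IsAdjoint.leftInverse {S S' T T' : (G → A) → G → A} (hS : IsAdjoint b S S')
    (hT : IsAdjoint b T T') (hTfin : ∀ y, HasFiniteSupport y → HasFiniteSupport (T y))
    (h : LeftInverse S' T) : LeftInverse T' S := fun x =>
  eq_of_forall_configPairing_eq b fun y hy => by
    rw [configPairing_comm, hT.symm _ _ (Or.inr hy), hS _ _ (Or.inr (hTfin y hy)), h y,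
      configPairing_comm]

theorem IsAdjoint.injective {S T : (G → A) → G → A} (h : IsAdjoint b S T)
    (hS : ∀ y, HasFiniteSupport y → ∃ z, HasFiniteSupport z ∧ S z = y) : Injective T :=
  fun u v huv => eq_of_forall_configPairing_eq b fun y hy => by
    obtain ⟨z, hz, rfl⟩ := hS y hy
    rw [h z u (Or.inl hz), h z v (Or.inl hz), huv]

variable (b) [Fintype ι] [Group G] [DecidableEq G] {M : Set G} [Fintype M]

noncomputable def dualRule (s : G → (M → A) → A) : G → ((M⁻¹ : Set G) → A) → A :=
  fun h w => ∑ m : M, b.transpose (fun a => s (h * (m : G)⁻¹) (Pi.single m a))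
    (w ⟨(m : G)⁻¹, Set.inv_mem_inv.2 m.2⟩)

variable {b}

theorem dualRule_congr {p p' : G → (M → A) → A} {h h' : G}
    (H : ∀ n ∈ M⁻¹, p (h * n) = p' (h' * n)) : dualRule b p h = dualRule b p' h' :=
  funext fun _ => Finset.sum_congr rfl fun m _ => by rw [H _ (Set.inv_mem_inv.2 m.2)]

theorem dualRule_translate (p : G → (M → A) → A) (g : G) :
    dualRule b (fun h => p (g⁻¹ * h)) = fun h => dualRule b p (g⁻¹ * h) :=
  funext fun _ => dualRule_congr fun _ _ => by rw [mul_assoc]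

theorem isLinearMap_dualRule (p : G → (M → A) → A) (h : G) :
    IsLinearMap k (dualRule b p h) := by
  constructor <;> intros <;> simp [dualRule, Finset.sum_add_distrib, Finset.smul_sum]

theorem image_dualRule_orbitClosure [Finite A] (s : G → (M → A) → A) :
    dualRule b '' orbitClosure s = orbitClosure (dualRule b s) := by
  let : TopologicalSpace ((M → A) → A) := ⊥
  have : DiscreteTopology ((M → A) → A) := ⟨rfl⟩
  let : TopologicalSpace (((M⁻¹ : Set G) → A) → A) := ⊥
  have : DiscreteTopology (((M⁻¹ : Set G) → A) → A) := ⟨rfl⟩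
  refine image_orbitClosure (continuous_pi fun h => ?_) dualRule_translate s
  exact continuous_of_forall_eqOn (M.toFinite.inv.image (h * ·)) fun p p' hpp' =>
    dualRule_congr fun n hn => hpp' ⟨n, hn, rfl⟩

theorem isAdjoint_nuca_dualRule {p : G → (M → A) → A} (hp : ∀ g, IsLinearMap k (p g)) :
    IsAdjoint b (nuca M p) (nuca M⁻¹ (dualRule b p)) := by
  intro x y hxy
  set T : G → M → A →ₗ[k] A := fun g m => b.transpose fun a => p g (Pi.single m a)
  have hT : ∀ g m a a', b.toDual a (T g m a') = b.toDual (p g (Pi.single m a)) a' :=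
    fun g m => b.toDual_transpose ⟨fun a a' => by rw [Pi.single_add, (hp g).map_add],
      fun c a => by rw [Pi.single_smul, (hp g).map_smul]⟩
  set F : G → M → k := fun g m => b.toDual (x (g * m)) (T g m (y g))
  have hleft : ∀ g, b.toDual (nuca M p x g) (y g) = ∑ m, F g m := by
    intro g
    simp only [F, hT]
    conv_lhs => rw [nuca, ← Finset.univ_sum_single (fun m : M => x (g * m))]
    rw [← IsLinearMap.mk'_apply (hp g), map_sum, map_sum, LinearMap.sum_apply]
    rfl
  have hright : ∀ h,
      b.toDual (x h) (nuca M⁻¹ (dualRule b p) y h) = ∑ m : M, F (h * (m : G)⁻¹) m := by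
    intro h
    simp [nuca, dualRule, F, T]
  have hF : ∀ m, HasFiniteSupport fun g => F g m := fun m =>
    hasFiniteSupport_toDual_apply b <|
      hxy.imp (fun hx => hx.preimage (mul_left_injective _).injOn)
        fun hy => hy.subset fun g hg hyg => hg (by simp [hyg])
  calc configPairing b (nuca M p x) y = ∑ᶠ g, ∑ m, F g m := finsum_congr hleft
    _ = ∑ m, ∑ᶠ g, F g m := finsum_sum_comm _ _ fun m _ => hF m
    _ = ∑ m : M, ∑ᶠ h, F (h * (m : G)⁻¹) m := Finset.sum_congr rfl fun m _ =>
      (finsum_comp_equiv (Equiv.mulRight (m : G)⁻¹)).symm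
    _ = ∑ᶠ h, ∑ m : M, F (h * (m : G)⁻¹) m := (finsum_sum_comm _ _ fun m _ =>
      (hF m).preimage (mul_left_injective _).injOn).symm
    _ = configPairing b x (nuca M⁻¹ (dualRule b p) y) := finsum_congr fun h => (hright h).symm

end Dual

section PostSurj

variable {G A : Type*} [AddCommGroup A] {σ : (G → A) → G → A}

theorem PostSurj.exists_hasFiniteSupport (hσ : PostSurj σ) (h0 : σ 0 = 0) {y : G → A}
    (hy : HasFiniteSupport y) : ∃ z, HasFiniteSupport z ∧ σ z = y := by
  obtain ⟨z, hz, rfl⟩ := hσ 0 y (by rwa [h0])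
  exact ⟨z, hz, rfl⟩

theorem postSurj_of_forall_hasFiniteSupport (hadd : ∀ x y, σ (x + y) = σ x + σ y)
    (h : ∀ y, HasFiniteSupport y → ∃ z, HasFiniteSupport z ∧ σ z = y) : PostSurj σ := by
  intro x y hxy
  obtain ⟨z, hz, hσz⟩ := h (y - σ x) (hxy.subset fun g hg => sub_ne_zero.1 hg)
  exact ⟨x + z, hz.subset fun g hg hz0 => hg (by simp [hz0]),
    by rw [hadd, hσz, add_sub_cancel]⟩

end PostSurj

section Duality

variable {k A ι G : Type*} [AddCommGroup A] [DecidableEq ι] [Group G] {M : Set G}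

theorem exists_window_of_injective [Finite A] [CommRing k] [Module k A]
    (b : Module.Basis ι k A) (hM : M.Finite) {p : G → (M → A) → A} (hp : ∀ g, p g 0 = 0)
    (hinj : Injective (nuca M p)) {y : G → A} (hy : HasFiniteSupport y) :
    ∃ W : Finset G, ∀ x, (∀ g ∈ W, nuca M p x g = 0) → configPairing b x y = 0 := by
  classical
  let : TopologicalSpace A := ⊥
  have : DiscreteTopology A := ⟨rfl⟩
  by_contra! hcon
  let C : Finset G → Set (G → A) := fun W =>
    {x | (∀ g ∈ W, nuca M p x g = 0) ∧ configPairing b x y ≠ 0}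
  have hC : ∀ W, IsClosed (C W) := fun W =>
    isClosed_of_forall_eqOn ((W.finite_toSet.mul hM).union hy) fun x x' hxx' hx =>
      ⟨fun g hg => (congrArg (p g) (funext fun m =>
          (hxx' (Or.inl (Set.mul_mem_mul hg m.2))).symm)).trans (hx.1 g hg),
        (configPairing_congr_left b fun g hg => (hxx' (Or.inr hg)).symm).trans_ne hx.2⟩
  have hdir : Directed (· ⊇ ·) C := fun W W' =>
    ⟨W ∪ W', fun _ hx => ⟨fun g hg => hx.1 g (Finset.mem_union_left _ hg), hx.2⟩,
      fun _ hx => ⟨fun g hg => hx.1 g (Finset.mem_union_right _ hg), hx.2⟩⟩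
  obtain ⟨x, hx⟩ := IsCompact.nonempty_iInter_of_directed_nonempty_isCompact_isClosed C hdir
    hcon (fun W => (hC W).isCompact) hC
  rw [Set.mem_iInter] at hx
  have hx0 : x = 0 :=
    hinj <| funext fun g => ((hx {g}).1 g (Finset.mem_singleton_self g)).trans (hp g).symm
  exact (hx ∅).2 (by simp [hx0, configPairing])

variable [Fintype ι] [DecidableEq G] [Fintype M]

theorem exists_hasFiniteSupport_nuca_dualRule_eq [Finite A] [Field k] [Module k A]
    (b : Module.Basis ι k A) {p : G → (M → A) → A} (hp : ∀ g, IsLinearMap k (p g))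
    (hinj : Injective (nuca M p)) {y : G → A} (hy : HasFiniteSupport y) :
    ∃ z, HasFiniteSupport z ∧ nuca M⁻¹ (dualRule b p) z = y := by
  obtain ⟨W, hW⟩ := exists_window_of_injective b M.toFinite (fun g => (hp g).map_zero) hinj hy
  let σ := (isLinearMap_nuca hp).mk' (nuca M p)
  let L : W × ι → (G → A) →ₗ[k] k := fun i =>
    b.toDual.flip (b i.2) ∘ₗ LinearMap.proj (i.1 : G) ∘ₗ σ
  let e : (G → A) →ₗ[k] k := ∑ g ∈ hy.toFinset, b.toDual.flip (y g) ∘ₗ LinearMap.proj g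
  have he : ∀ x, e x = configPairing b x y := fun x => by
    rw [configPairing_eq_sum b (x := x) (Set.Finite.coe_toFinset hy).superset]
    simp [e]
  have hker : ⨅ i, LinearMap.ker (L i) ≤ LinearMap.ker e := fun x hx => by
    simp only [Submodule.mem_iInf, LinearMap.mem_ker] at hx ⊢
    rw [he]
    refine hW x fun g hg => b.toDual_injective (b.ext fun j => ?_)
    simpa [L, σ] using hx ⟨⟨g, hg⟩, j⟩
  -- `⟨·, y⟩` vanishes wherever all the `L i` do, so it is a linear combination of them
  obtain ⟨c, hc⟩ :=
    (Submodule.mem_span_range_iff_exists_fun k).1 (mem_span_of_iInf_ker_le_ker hker)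
  refine ⟨∑ i : W × ι, Pi.single (i.1 : G) (c i • b i.2), ?_,
    eq_of_forall_configPairing_eq b fun x hx => ?_⟩
  · rw [Finset.sum_fn]
    exact .sum (fun i => (Set.finite_singleton _).subset Pi.support_single_subset) _
  · rw [← isAdjoint_nuca_dualRule hp x _ (Or.inl hx), configPairing_sum_single_right, ← he,
      ← hc]
    simp [L, σ]

theorem injective_nuca_dualRule_of_postSurj [CommRing k] [Module k A] (b : Module.Basis ι k A)
    {p : G → (M → A) → A} (hp : ∀ g, IsLinearMap k (p g)) (h : PostSurj (nuca M p)) :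
    Injective (nuca M⁻¹ (dualRule b p)) :=
  (isAdjoint_nuca_dualRule hp).injective fun _ hy =>
    h.exists_hasFiniteSupport (isLinearMap_nuca hp).map_zero hy

theorem postSurj_nuca_dualRule_of_injective [Finite A] [Field k] [Module k A]
    (b : Module.Basis ι k A) {p : G → (M → A) → A} (hp : ∀ g, IsLinearMap k (p g))
    (h : Injective (nuca M p)) :
    PostSurj (nuca M⁻¹ (dualRule b p)) :=
  postSurj_of_forall_hasFiniteSupport (isLinearMap_nuca (isLinearMap_dualRule p)).map_add
    fun _ hy => exists_hasFiniteSupport_nuca_dualRule_eq b hp h hy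

theorem StablyInvertible.of_dualRule [Finite A] [CommRing k] [Module k A]
    (b : Module.Basis ι k A) {s : G → (M → A) → A} (hs : ∀ g, IsLinearMap k (s g))
    (h : StablyInvertible M⁻¹ (dualRule b s)) : StablyInvertible M s := by
  obtain ⟨N, hN, t, ht⟩ := h
  have := hN.fintype
  refine ⟨N⁻¹, hN.inv, dualRule b t, fun p hp => ?_⟩
  have hpl : ∀ g, IsLinearMap k (p g) := forall_apply_of_mem_orbitClosure hs hp
  obtain ⟨q, hq, hqp, hpq⟩ :=
    ht _ (image_dualRule_orbitClosure (b := b) s ▸ Set.mem_image_of_mem _ hp)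
  have hql : ∀ g, IsLinearMap k (q g) := isLinearMap_of_isLinearMap_nuca
    (LinearMap.inverse ((isLinearMap_nuca (isLinearMap_dualRule p)).mk' _) _ hqp hpq).isLinear
  have hP := isAdjoint_nuca_dualRule (b := b) hpl
  have hQ := isAdjoint_nuca_dualRule (b := b) hql
  exact ⟨dualRule b q, image_dualRule_orbitClosure (b := b) t ▸ Set.mem_image_of_mem _ hq,
    hP.leftInverse hQ (fun _ hy => hy.nuca hN fun g => (hql g).map_zero) hpq,
    hQ.symm.leftInverse hP.symm
      (fun _ hy => hy.nuca M.toFinite.inv fun g => (isLinearMap_dualRule p g).map_zero) hqp⟩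

end Duality

theorem stmt10_general {k A : Type*} [Field k] [AddCommGroup A] [Module k A] [Finite A]
    {G : Type*} [Group G] :
    (∀ (M : Set G) (_ : M.Finite) (s : G → (M → A) → A),
        (∀ g, IsLinearMap k (s g)) → UBS s →
        (∀ p ∈ orbitClosure s, Function.Injective (nuca M p)) →
        StablyInvertible M s) ↔
      (∀ (M : Set G) (_ : M.Finite) (s : G → (M → A) → A),
        (∀ g, IsLinearMap k (s g)) → UBS s →
        (∀ p ∈ orbitClosure s, PostSurj (nuca M p)) →
        StablyInvertible M s) := by
  classical
  let b := Module.finBasis k A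
  constructor
  · intro H M hM s hs hUBS hPS
    have := hM.fintype
    refine (H _ hM.inv _ (isLinearMap_dualRule (b := b) s)
      (hUBS.of_window hM.inv fun _ _ => dualRule_congr) ?_).of_dualRule b hs
    rw [← image_dualRule_orbitClosure]
    rintro _ ⟨p, hp, rfl⟩
    exact injective_nuca_dualRule_of_postSurj b (forall_apply_of_mem_orbitClosure hs hp)
      (hPS p hp)
  · intro H M hM s hs hUBS hInj
    have := hM.fintype
    refine (H _ hM.inv _ (isLinearMap_dualRule (b := b) s)
      (hUBS.of_window hM.inv fun _ _ => dualRule_congr) ?_).of_dualRule b hs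
    rw [← image_dualRule_orbitClosure]
    rintro _ ⟨p, hp, rfl⟩
    exact postSurj_nuca_dualRule_of_injective b (forall_apply_of_mem_orbitClosure hs hp)
      (hInj p hp)

/-- For a finitely generated group `G` and a finite vector space alphabet `A`,
the stable surjunctivity conjecture holds for all linear NUCA `A^G → A^G` of
finite memory with uniformly bounded singularity if and only if so does the
stable dual-surjunctivity conjecture. -/
theorem stmt10 {k A : Type*} [Field k] [AddCommGroup A] [Module k A] [Finite A]
    {G : Type*} [Group G] (hfg : Group.FG G) :
    (∀ (M : Set G) (_ : M.Finite) (s : G → (M → A) → A),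
        (∀ g, IsLinearMap k (s g)) → UBS s →
        (∀ p ∈ orbitClosure s, Function.Injective (nuca M p)) →
        StablyInvertible M s) ↔
      (∀ (M : Set G) (_ : M.Finite) (s : G → (M → A) → A),
        (∀ g, IsLinearMap k (s g)) → UBS s →
        (∀ p ∈ orbitClosure s, PostSurj (nuca M p)) →
        StablyInvertible M s) :=
  stmt10_general
end

section
/- Let k be a field and G a group. Define D¹(k[G]) = k[G] × (k[G])[G] with componentwise addition and multiplication (α₁,β₁)*(α₂,β₂) = (α₁α₂, α₁β₂ + β₁α₂ + β₁β₂), where α₁α₂ is the group-ring product and the twisted products are (αβ)(g)(h) = Σ_t α(t)β(gt)(t⁻¹h), (βα)(g)(h) = Σ_t β(g)(t)α(t⁻¹h), (βγ)(g)(h) = Σ_t β(g)(t)γ(gt)(t⁻¹h). Then D¹(k[G]) is an associative unital ring with unit (1,0), and the map α ↦ (α,0) is an injective ring homomorphism k[G] → D¹(k[G]). -/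
open Finsupp

/-- The twisted product `αβ` of `α ∈ k[G]` and `β ∈ (k[G])[G]`:
`(αβ)(g)(h) = Σ_t α(t) β(gt)(t⁻¹h)`. -/
noncomputable def tw1 {k G : Type*} [Field k] [Group G]
    (α : MonoidAlgebra k G) (β : G →₀ MonoidAlgebra k G) :
    G →₀ MonoidAlgebra k G :=
  α.coeff.sum fun t a =>
    Finsupp.equivMapDomain (Equiv.mulRight t⁻¹)
      (β.mapRange (fun γ => a • (MonoidAlgebra.single t (1 : k) * γ)) (by simp))

/-- The twisted product `βα` of `β ∈ (k[G])[G]` and `α ∈ k[G]`: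
`(βα)(g)(h) = Σ_t β(g)(t) α(t⁻¹h)`, i.e. `(βα)(g) = β(g) * α` in `k[G]`. -/
noncomputable def tw2 {k G : Type*} [Field k] [Group G]
    (β : G →₀ MonoidAlgebra k G) (α : MonoidAlgebra k G) :
    G →₀ MonoidAlgebra k G :=
  β.mapRange (fun γ => γ * α) (by simp)

/-- The twisted product `βγ` of `β, γ ∈ (k[G])[G]`:
`(βγ)(g)(h) = Σ_t β(g)(t) γ(gt)(t⁻¹h)`. -/
noncomputable def tw3 {k G : Type*} [Field k] [Group G]
    (β γ : G →₀ MonoidAlgebra k G) : G →₀ MonoidAlgebra k G :=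
  Finsupp.onFinset β.support
    (fun g => (β g).coeff.sum fun t b => b • (MonoidAlgebra.single t (1 : k) * γ (g * t)))
    (fun g hg => by
      by_contra hmem
      apply hg
      try dsimp only
      rw [Finsupp.notMem_support_iff.mp hmem, MonoidAlgebra.coeff_zero, Finsupp.sum_zero_index])

/-- `D¹(k[G]) = k[G] × (k[G])[G]` with componentwise addition. -/
def D1 (k G : Type*) [Field k] [Group G] :=
  MonoidAlgebra k G × (G →₀ MonoidAlgebra k G)

noncomputable instance {k G : Type*} [Field k] [Group G] : AddCommGroup (D1 k G) :=
  inferInstanceAs (AddCommGroup (MonoidAlgebra k G × (G →₀ MonoidAlgebra k G)))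

/-- The multiplication of `D¹(k[G])`:
`(α₁,β₁) * (α₂,β₂) = (α₁α₂, α₁β₂ + β₁α₂ + β₁β₂)` with twisted products. -/
noncomputable def dmul {k G : Type*} [Field k] [Group G] (x y : D1 k G) : D1 k G :=
  (x.1 * y.1, tw1 x.1 y.2 + tw2 x.2 y.1 + tw3 x.2 y.2)

/-- The unit `(1, 0)` of `D¹(k[G])`. -/
noncomputable def done (k G : Type*) [Field k] [Group G] : D1 k G :=
  ((1 : MonoidAlgebra k G), 0)

/-- The embedding `k[G] → D¹(k[G])`, `α ↦ (α, 0)`. -/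
noncomputable def emb (k G : Type*) [Field k] [Group G] (α : MonoidAlgebra k G) : D1 k G :=
  (α, 0)

/-!
Each `x = (α, β) ∈ D¹(k[G])` acts `k`-linearly on `k[G]` by sending the basis element `g` to
`g · (α + β(g))`. The twisted products are exactly what makes this a right action (`x * y` acts
as `x` followed by `y`), and since `g` is a unit, `x` is determined by `α` together with its
action. So the ring axioms of `D¹(k[G])` are inherited from those of `End_k(k[G])` and `k[G]`.
-/

namespace MonoidAlgebra

variable {k G : Type*} [CommSemiring k] [Monoid G]

noncomputable def mulRightFamily (F : G → MonoidAlgebra k G) :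
    MonoidAlgebra k G →ₗ[k] MonoidAlgebra k G :=
  (basis G k).constr k fun t => single t 1 * F t

theorem mulRightFamily_apply (F : G → MonoidAlgebra k G) (u : MonoidAlgebra k G) :
    mulRightFamily F u = u.coeff.sum fun t a => a • (single t 1 * F t) :=
  (basis G k).constr_apply k _ u

theorem mulRightFamily_single (F : G → MonoidAlgebra k G) (t : G) :
    mulRightFamily F (single t 1) = single t 1 * F t :=
  (basis G k).constr_basis k _ t

theorem mulRightFamily_add (F F' : G → MonoidAlgebra k G) :
    mulRightFamily (F + F') = mulRightFamily F + mulRightFamily F' := by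
  simp only [mulRightFamily, Pi.add_apply, mul_add]
  exact map_add ((basis G k).constr k) _ _

theorem mulRightFamily_const (γ : MonoidAlgebra k G) :
    mulRightFamily (fun _ => γ) = LinearMap.mulRight k γ :=
  (basis G k).ext fun t => mulRightFamily_single _ t

theorem mulRightFamily_single_one_mul (F : G → MonoidAlgebra k G) (g : G)
    (u : MonoidAlgebra k G) :
    mulRightFamily F (single g 1 * u) = single g 1 * mulRightFamily (fun t => F (g * t)) u := by
  show (mulRightFamily F ∘ₗ LinearMap.mulLeft k (single g 1)) u =
    (LinearMap.mulLeft k (single g 1) ∘ₗ mulRightFamily fun t => F (g * t)) u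
  congr 1
  refine (basis G k).ext fun t => ?_
  simp only [LinearMap.comp_apply, LinearMap.mulLeft_apply, basis_apply, mulRightFamily_single]
  rw [← mul_assoc, single_mul_single, one_mul]
  exact mulRightFamily_single F (g * t)

end MonoidAlgebra

open MonoidAlgebra (basis basis_apply mulRightFamily mulRightFamily_apply mulRightFamily_single
  mulRightFamily_add mulRightFamily_const mulRightFamily_single_one_mul)

namespace D1

variable {k G : Type*} [Field k] [Group G]

theorem tw1_apply (α : MonoidAlgebra k G) (β : G →₀ MonoidAlgebra k G) (g : G) :
    tw1 α β g = mulRightFamily (fun t => β (g * t)) α := by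
  simp [tw1, mulRightFamily_apply, Finsupp.sum_apply, Finsupp.equivMapDomain_apply,
    Finsupp.mapRange_apply]

theorem tw2_apply (β : G →₀ MonoidAlgebra k G) (α : MonoidAlgebra k G) (g : G) :
    tw2 β α g = β g * α :=
  rfl

theorem tw3_apply (β γ : G →₀ MonoidAlgebra k G) (g : G) :
    tw3 β γ g = mulRightFamily (fun t => γ (g * t)) (β g) := by
  simp [tw3, mulRightFamily_apply]

noncomputable def fiber (x : D1 k G) (g : G) : MonoidAlgebra k G :=
  x.1 + x.2 g

theorem fiber_add (x y : D1 k G) (g : G) : (x + y).fiber g = x.fiber g + y.fiber g :=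
  add_add_add_comm _ _ _ _

theorem fiber_dmul (x y : D1 k G) (g : G) :
    (dmul x y).fiber g = mulRightFamily (fun t => y.fiber (g * t)) (x.fiber g) := by
  have hsplit : (fun t => y.fiber (g * t)) = (fun _ => y.1) + fun t => y.2 (g * t) := rfl
  rw [hsplit, mulRightFamily_add, mulRightFamily_const, fiber, fiber,
    LinearMap.add_apply, map_add, map_add, LinearMap.mulRight_apply, LinearMap.mulRight_apply,
    ← tw1_apply, ← tw3_apply]
  simp only [dmul, Finsupp.add_apply, tw2_apply]
  abel

noncomputable def toEnd (x : D1 k G) : MonoidAlgebra k G →ₗ[k] MonoidAlgebra k G :=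
  mulRightFamily x.fiber

theorem toEnd_dmul (x y : D1 k G) : (dmul x y).toEnd = y.toEnd ∘ₗ x.toEnd :=
  (basis G k).ext fun g => by
    simp only [toEnd, basis_apply, LinearMap.comp_apply, mulRightFamily_single,
      mulRightFamily_single_one_mul, fiber_dmul]

theorem toEnd_done : (done k G).toEnd = LinearMap.id :=
  (basis G k).ext fun g => by simp [toEnd, mulRightFamily_single, fiber, done]

theorem toEnd_add (x y : D1 k G) : (x + y).toEnd = x.toEnd + y.toEnd := by
  rw [toEnd, toEnd, toEnd, ← mulRightFamily_add]
  exact congrArg mulRightFamily (funext (fiber_add x y))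

theorem toEnd_emb (α : MonoidAlgebra k G) : (emb k G α).toEnd = LinearMap.mulRight k α := by
  rw [← mulRightFamily_const]
  exact congrArg mulRightFamily (funext fun _ => add_zero α)

theorem ext_of_toEnd {x y : D1 k G} (h₁ : x.1 = y.1) (h : x.toEnd = y.toEnd) : x = y := by
  refine Prod.ext h₁ (Finsupp.ext fun g => ?_)
  have hunit : IsUnit (MonoidAlgebra.single g (1 : k)) :=
    (Group.isUnit g).map (MonoidAlgebra.of k G)
  have hfiber : x.fiber g = y.fiber g :=
    hunit.mul_left_cancel (by
      rw [← mulRightFamily_single, ← mulRightFamily_single]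
      exact LinearMap.congr_fun h _)
  rwa [fiber, fiber, h₁, add_right_inj] at hfiber

theorem dmul_assoc (a b c : D1 k G) : dmul (dmul a b) c = dmul a (dmul b c) :=
  ext_of_toEnd (mul_assoc a.1 b.1 c.1) (by
    rw [toEnd_dmul, toEnd_dmul, toEnd_dmul, toEnd_dmul, LinearMap.comp_assoc])

theorem done_dmul (a : D1 k G) : dmul (done k G) a = a :=
  ext_of_toEnd (one_mul a.1) (by rw [toEnd_dmul, toEnd_done, LinearMap.comp_id])

theorem dmul_done (a : D1 k G) : dmul a (done k G) = a :=
  ext_of_toEnd (mul_one a.1) (by rw [toEnd_dmul, toEnd_done, LinearMap.id_comp])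

theorem dmul_add (a b c : D1 k G) : dmul a (b + c) = dmul a b + dmul a c :=
  ext_of_toEnd (mul_add a.1 b.1 c.1) (by simp only [toEnd_dmul, toEnd_add, LinearMap.add_comp])

theorem add_dmul (a b c : D1 k G) : dmul (a + b) c = dmul a c + dmul b c :=
  ext_of_toEnd (add_mul a.1 b.1 c.1) (by simp only [toEnd_dmul, toEnd_add, LinearMap.comp_add])

theorem emb_injective : Function.Injective (emb k G) :=
  fun _ _ h => congrArg Prod.fst h

theorem emb_mul (α β : MonoidAlgebra k G) : emb k G (α * β) = dmul (emb k G α) (emb k G β) :=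
  ext_of_toEnd rfl (by rw [toEnd_dmul, toEnd_emb, toEnd_emb, toEnd_emb, LinearMap.mulRight_mul])

theorem emb_add (α β : MonoidAlgebra k G) : emb k G (α + β) = emb k G α + emb k G β :=
  Prod.ext rfl (add_zero 0).symm

end D1

/-- `D¹(k[G])` is an associative unital ring with unit `(1,0)` (addition being
componentwise, which is already an abelian group structure), and `α ↦ (α, 0)`
is an injective ring homomorphism `k[G] → D¹(k[G])`. -/
theorem stmt11 {k G : Type*} [Field k] [Group G] :
    (∀ a b c : D1 k G, dmul (dmul a b) c = dmul a (dmul b c)) ∧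
    (∀ a : D1 k G, dmul (done k G) a = a) ∧
    (∀ a : D1 k G, dmul a (done k G) = a) ∧
    (∀ a b c : D1 k G, dmul a (b + c) = dmul a b + dmul a c) ∧
    (∀ a b c : D1 k G, dmul (a + b) c = dmul a c + dmul b c) ∧
    Function.Injective (emb k G) ∧
    (∀ α β : MonoidAlgebra k G, emb k G (α * β) = dmul (emb k G α) (emb k G β)) ∧
    (∀ α β : MonoidAlgebra k G, emb k G (α + β) = emb k G α + emb k G β) ∧
    emb k G 1 = done k G :=
  ⟨D1.dmul_assoc, D1.done_dmul, D1.dmul_done, D1.dmul_add, D1.add_dmul, D1.emb_injective,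
    D1.emb_mul, D1.emb_add, rfl⟩
end
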